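/- For all integers a, b with b ≤ a ≤ 2b and b ≥ 1, there exists a graph G with n vertices and m edges such that m/n = a/b and ψ_3(G) ≥ (2n + m)/6; hence the bound ψ_3(G) ≤ (2n+m)/6 is tight for all such edge densities. -/

import Mathlib

open SimpleGraph

variable {V : Type*}

/-- `S` is a `k`-path vertex cover of `G`: every path on `k` vertices meets `S`. -/
def IsPathVC (G : SimpleGraph V) (k : ℕ) (S : Set V) : Prop :=
  ∀ ⦃u v : V⦄ (w : G.Walk u v), w.IsPath → w.length + 1 = k → ∃ x ∈ w.support, x ∈ S

/-- `psi G k` is the minimum cardinality of a `k`-path vertex cover of `G`. -/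
noncomputable def psi (G : SimpleGraph V) (k : ℕ) : ℕ :=
  sInf {n | ∃ S : Set V, IsPathVC G k S ∧ S.ncard = n}

/-!
`C₄ = K_{2,2}` and `H₆ = K_{2,2,2}` arise from the cliques `K₂` and `K₃` by replacing every
vertex with a pair of non-adjacent twins. In such a graph any three vertices of one component
contain a path on three vertices, so a 3-path vertex cover misses at most two vertices of each
component, and `ψ₃ ≥ n - 2c` for a graph with `n` vertices and `c` components. For `x` copies
of `C₄` and `y` copies of `H₆` this gives `n = 4x + 6y = 12b`, `m = 4x + 12y = 12a` and
`ψ₃ ≥ 2x + 4y = 4b + 2a = (2n + m) / 6`.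
-/

open Finset

section PathVertexCover

variable {W : Type*} {G : SimpleGraph V} {H : SimpleGraph W} {k : ℕ}

theorem isPathVC_univ : IsPathVC G k Set.univ :=
  fun u _ w _ _ => ⟨u, w.start_mem_support, trivial⟩

theorem IsPathVC.comap {S : Set W} (hS : IsPathVC H k S) (φ : G ↪g H) :
    IsPathVC G k (φ ⁻¹' S) := by
  intro u v w hw hlen
  obtain ⟨x, hx, hxS⟩ := hS (w.map φ.toHom) (hw.map φ.injective) (by rwa [Walk.length_map])
  obtain ⟨y, hy, rfl⟩ := List.mem_map.mp (w.support_map φ.toHom ▸ hx)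
  exact ⟨y, hy, hxS⟩

theorem IsPathVC.mem_or_mem_or_mem {S : Set V} (hS : IsPathVC G 3 S) {u v w : V}
    (huv : G.Adj u v) (hvw : G.Adj v w) (huw : u ≠ w) : u ∈ S ∨ v ∈ S ∨ w ∈ S := by
  have hpath : (Walk.cons huv (Walk.cons hvw Walk.nil)).IsPath := by
    simp [huv.ne, hvw.ne, huw]
  obtain ⟨x, hx, hxS⟩ := hS _ hpath rfl
  simp only [Walk.support_cons, Walk.support_nil, List.mem_cons, List.not_mem_nil,
    or_false] at hx
  rcases hx with rfl | rfl | rfl <;> simp [hxS]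

theorem exists_isPathVC_ncard_eq_psi (G : SimpleGraph V) (k : ℕ) :
    ∃ S, IsPathVC G k S ∧ S.ncard = psi G k :=
  Nat.sInf_mem (s := {n | ∃ S, IsPathVC G k S ∧ S.ncard = n})
    ⟨_, Set.univ, isPathVC_univ, rfl⟩

theorem psi_le_ncard {S : Set V} (hS : IsPathVC G k S) : psi G k ≤ S.ncard :=
  Nat.sInf_le ⟨S, hS, rfl⟩

theorem psi_le_psi_of_embedding [Finite W] (φ : G ↪g H) : psi G k ≤ psi H k := by
  obtain ⟨S, hS, hcard⟩ := exists_isPathVC_ncard_eq_psi H k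
  calc psi G k ≤ (φ ⁻¹' S).ncard := psi_le_ncard (hS.comap φ)
    _ ≤ S.ncard := Set.ncard_le_ncard_of_injOn φ (fun _ h => h) φ.injective.injOn
    _ = psi H k := hcard

theorem SimpleGraph.Iso.ncard_edgeSet_eq (e : G ≃g H) : G.edgeSet.ncard = H.edgeSet.ncard :=
  Set.ncard_congr' e.mapEdgeSet

end PathVertexCover

section PairedCliques

variable {Q B : Type*}

/-- A fibre of `β` with `k` points spans a component `K_{2,…,2}`, i.e. `K_{2k}` minus a perfect
matching. -/
def pairedCliques (β : Q → B) : SimpleGraph (Q × Fin 2) where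
  Adj u v := β u.1 = β v.1 ∧ u.1 ≠ v.1
  symm := ⟨fun _ _ h => ⟨h.1.symm, h.2.symm⟩⟩
  loopless := ⟨fun _ h => h.2 rfl⟩

variable {β : Q → B}

instance [DecidableEq Q] [DecidableEq B] : DecidableRel (pairedCliques β).Adj :=
  fun _ _ => inferInstanceAs (Decidable (_ ∧ _))

theorem pairedCliques_adj {u v : Q × Fin 2} :
    (pairedCliques β).Adj u v ↔ β u.1 = β v.1 ∧ u.1 ≠ v.1 := Iff.rfl

theorem pairedCliques_degree [Fintype Q] [DecidableEq Q] [DecidableEq B] (v : Q × Fin 2) :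
    (pairedCliques β).degree v = 2 * (#{q | β q = β v.1} - 1) := by
  have hnbr : (pairedCliques β).neighborFinset v =
      ({q | β q = β v.1} : Finset Q).erase v.1 ×ˢ univ := by
    ext w
    simp [pairedCliques_adj, eq_comm, and_comm]
  rw [← card_neighborFinset_eq_degree, hnbr, card_product, card_erase_of_mem (by simp),
    card_univ, Fintype.card_fin, mul_comm]

theorem card_edgeFinset_pairedCliques [Fintype Q] [DecidableEq Q] [DecidableEq B] :
    #(pairedCliques β).edgeFinset = 2 * ∑ q, (#{q' | β q' = β q} - 1) := by
  have handshake := sum_degrees_eq_twice_card_edges (pairedCliques β)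
  simp only [pairedCliques_degree, Fintype.sum_prod_type, sum_const, card_univ,
    Fintype.card_fin, smul_eq_mul, ← mul_sum] at handshake
  omega

theorem IsPathVC.pairedCliques_mem_or_mem_or_mem {S : Set (Q × Fin 2)}
    (hS : IsPathVC (pairedCliques β) 3 S) {u v w : Q × Fin 2} (huv : u ≠ v) (huw : u ≠ w)
    (hvw : v ≠ w) (hβuv : β u.1 = β v.1) (hβvw : β v.1 = β w.1) :
    u ∈ S ∨ v ∈ S ∨ w ∈ S := by
  have twin : ∀ {a b c : Q × Fin 2}, a ≠ b → a ≠ c → b ≠ c → a.1 = b.1 → a.1 ≠ c.1 := by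
    rintro ⟨q, s⟩ ⟨q', s'⟩ ⟨q'', s''⟩ hab hac hbc (rfl : q = q') (rfl : q = q'')
    simp only [ne_eq, Prod.mk.injEq, true_and] at hab hac hbc
    omega
  by_cases h₁ : u.1 = v.1
  · have h₃ : u.1 ≠ w.1 := twin huv huw hvw h₁
    have := hS.mem_or_mem_or_mem (u := u) (v := w) (w := v)
      ⟨hβuv.trans hβvw, h₃⟩ ⟨hβvw.symm, fun h => h₃ (h₁.trans h.symm)⟩ huv
    tauto
  · by_cases h₂ : v.1 = w.1
    · have := hS.mem_or_mem_or_mem (u := v) (v := u) (w := w) ⟨hβuv.symm, Ne.symm h₁⟩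
        ⟨hβuv.trans hβvw, fun h => h₁ (h.trans h₂.symm)⟩ hvw
      tauto
    · exact hS.mem_or_mem_or_mem ⟨hβuv, h₁⟩ ⟨hβvw, h₂⟩ huw

theorem card_le_psi_pairedCliques_add [Fintype Q] [Fintype B] :
    2 * Fintype.card Q ≤ psi (pairedCliques β) 3 + 2 * Fintype.card B := by
  classical
  obtain ⟨S, hS, hcard⟩ := exists_isPathVC_ncard_eq_psi (pairedCliques β) 3
  have hfibre : ∀ b, #{v ∈ Sᶜ.toFinset | β v.1 = b} ≤ 2 := by
    intro b
    by_contra! h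
    obtain ⟨u, v, w, hu, hv, hw, huv, huw, hvw⟩ := Finset.two_lt_card_iff.mp h
    simp only [Finset.mem_filter, Set.mem_toFinset, Set.mem_compl_iff] at hu hv hw
    have := hS.pairedCliques_mem_or_mem_or_mem huv huw hvw (hu.2.trans hv.2.symm)
      (hv.2.trans hw.2.symm)
    tauto
  have hcompl : Sᶜ.ncard ≤ 2 * Fintype.card B := by
    rw [Set.ncard_eq_toFinset_card', ← Finset.card_univ]
    exact Finset.card_le_mul_card_image_of_maps_to (fun _ _ => Finset.mem_univ _) 2
      (fun b _ => hfibre b)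
  have hsplit := Set.ncard_add_ncard_compl S
  rw [Nat.card_eq_fintype_card, Fintype.card_prod, Fintype.card_fin] at hsplit
  omega

end PairedCliques

abbrev c4H6Block (x y : ℕ) : Fin x × Fin 2 ⊕ Fin y × Fin 3 → Fin x ⊕ Fin y :=
  Sum.map Prod.fst Prod.fst

abbrev c4H6Union (x y : ℕ) : SimpleGraph ((Fin x × Fin 2 ⊕ Fin y × Fin 3) × Fin 2) :=
  pairedCliques (c4H6Block x y)

theorem card_fibre_c4H6Block (x y : ℕ) (q : Fin x × Fin 2 ⊕ Fin y × Fin 3) :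
    #{q' | c4H6Block x y q' = c4H6Block x y q} = Sum.elim (fun _ => 2) (fun _ => 3) q := by
  rcases q with ⟨i, p⟩ | ⟨j, p⟩ <;>
    (rw [card_filter, Fintype.sum_sum_type, Fintype.sum_prod_type, Fintype.sum_prod_type]; simp)

theorem card_edgeFinset_c4H6Union (x y : ℕ) : #(c4H6Union x y).edgeFinset = 4 * x + 12 * y := by
  rw [card_edgeFinset_pairedCliques]
  simp only [card_fibre_c4H6Block, Fintype.sum_sum_type, Sum.elim_inl, Sum.elim_inr,
    Nat.add_one_sub_one, sum_const, card_univ, Fintype.card_prod, Fintype.card_fin,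
    smul_eq_mul, mul_one]
  ring

theorem two_mul_add_four_mul_le_psi_c4H6Union (x y : ℕ) :
    2 * x + 4 * y ≤ psi (c4H6Union x y) 3 := by
  have := card_le_psi_pairedCliques_add (β := c4H6Block x y)
  simp only [Fintype.card_sum, Fintype.card_prod, Fintype.card_fin] at this
  unfold c4H6Union
  omega

theorem psi_three_sparse_tight (a b : ℕ) (hb : 1 ≤ b) (hba : b ≤ a) (hab : a ≤ 2 * b) :
    ∃ (N : ℕ) (G : SimpleGraph (Fin N)), 0 < N ∧
      (G.edgeSet.ncard : ℚ) / N = (a : ℚ) / b ∧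
      (2 * (N : ℚ) + (G.edgeSet.ncard : ℚ)) / 6 ≤ (psi G 3 : ℚ) := by
  set x := 3 * (2 * b - a)
  set y := 2 * (a - b)
  have hN : Fintype.card ((Fin x × Fin 2 ⊕ Fin y × Fin 3) × Fin 2) = 12 * b := by
    simp only [Fintype.card_prod, Fintype.card_sum, Fintype.card_fin]
    omega
  set G := (c4H6Union x y).overFin hN
  let e : c4H6Union x y ≃g G := (c4H6Union x y).overFinIso hN
  have hm : G.edgeSet.ncard = 12 * a := by
    rw [← e.ncard_edgeSet_eq, ← coe_edgeFinset, Set.ncard_coe_finset,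
      card_edgeFinset_c4H6Union]
    omega
  have hψ : 4 * b + 2 * a ≤ psi G 3 :=
    calc 4 * b + 2 * a = 2 * x + 4 * y := by omega
      _ ≤ psi (c4H6Union x y) 3 := two_mul_add_four_mul_le_psi_c4H6Union x y
      _ ≤ psi G 3 := psi_le_psi_of_embedding e.toEmbedding
  refine ⟨12 * b, G, by omega, ?_, ?_⟩
  · rw [hm]
    push_cast
    exact mul_div_mul_left _ _ (by norm_num)
  · have hψ' : ((4 * b + 2 * a : ℕ) : ℚ) ≤ psi G 3 := by exact_mod_cast hψ
    rw [hm]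
    push_cast at hψ' ⊢
    linarith
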